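/- arXiv:1601.03585 — 3 statements merged into one kernel-verified Lean document; each statement's English description precedes it below -/
import Mathlib

section
/- Hadamard's three circle theorem: let 0 < r₁ < r₂ < r₃ and let f be holomorphic on an open neighborhood of the closed annulus {z ∈ ℂ : r₁ ≤ |z| ≤ r₃}. Set M(r) = max_{|z|=r} |f(z)|. Then log(r₃/r₁) · log M(r₂) ≤ log(r₃/r₂) · log M(r₁) + log(r₂/r₁) · log M(r₃); equivalently, M(r₂)^{log(r₃/r₁)} ≤ M(r₁)^{log(r₃/r₂)} · M(r₃)^{log(r₂/r₁)}. -/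
/-!
Under `exp`, the closed strip `log r₁ ≤ re w ≤ log r₃` covers the closed annulus and its edges
go to the two boundary circles. Hadamard's three lines theorem for `f ∘ exp` therefore gives
`M(r₂) ≤ M(r₁) ^ (1 - t) * M(r₃) ^ t` with `t = log (r₂ / r₁) / log (r₃ / r₁)`, and taking
logarithms gives the inequality. This fails only when `M(r₂) = 0` (and `Real.log 0 = 0`); then
`f ∘ exp` vanishes on a vertical line, hence on the whole strip by the identity theorem, so `f`
vanishes on the annulus and both sides are `0`.
-/

open Set Filter Topology Complex Complex.HadamardThreeLines

def closedAnnulus (r₁ r₃ : ℝ) : Set ℂ := {z | r₁ ≤ ‖z‖ ∧ ‖z‖ ≤ r₃}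

def openAnnulus (r₁ r₃ : ℝ) : Set ℂ := {z | r₁ < ‖z‖ ∧ ‖z‖ < r₃}

noncomputable def maxModulus (f : ℂ → ℂ) (r : ℝ) : ℝ :=
  sSup ((fun z => ‖f z‖) '' {z : ℂ | ‖z‖ = r})

theorem frequently_re_eq_nhdsNE (x : ℂ) : ∃ᶠ w in 𝓝[≠] x, w.re = x.re := by
  have hline : Tendsto (fun y : ℝ => x + y * I) (𝓝[≠] 0) (𝓝[≠] x) := by
    refine tendsto_nhdsWithin_of_tendsto_nhds_of_eventually_within _ ?_ ?_
    · exact (Continuous.tendsto' (by fun_prop) 0 x (by simp)).mono_left nhdsWithin_le_nhds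
    · filter_upwards [self_mem_nhdsWithin] with y hy
      simpa [Complex.ext_iff] using hy
  exact hline.frequently (Eventually.frequently (Eventually.of_forall fun y => by simp))

theorem closure_verticalStrip {l u : ℝ} (h : l < u) :
    closure (verticalStrip l u) = verticalClosedStrip l u := by
  rw [verticalStrip, closure_preimage_re, closure_Ioo h.ne, verticalClosedStrip]

theorem isClosed_closedAnnulus (r₁ r₃ : ℝ) : IsClosed (closedAnnulus r₁ r₃) :=
  (isClosed_le continuous_const continuous_norm).inter
    (isClosed_le continuous_norm continuous_const)

theorem isCompact_closedAnnulus (r₁ r₃ : ℝ) : IsCompact (closedAnnulus r₁ r₃) :=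
  (isCompact_closedBall (0 : ℂ) r₃).of_isClosed_subset (isClosed_closedAnnulus r₁ r₃)
    fun _ hz => mem_closedBall_zero_iff.2 hz.2

theorem circle_subset_closedAnnulus {r₁ r r₃ : ℝ} (h₁ : r₁ ≤ r) (h₃ : r ≤ r₃) :
    {z : ℂ | ‖z‖ = r} ⊆ closedAnnulus r₁ r₃ :=
  fun _ hz => ⟨hz.symm ▸ h₁, hz.symm ▸ h₃⟩

theorem closure_openAnnulus_subset (r₁ r₃ : ℝ) :
    closure (openAnnulus r₁ r₃) ⊆ closedAnnulus r₁ r₃ :=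
  closure_minimal (fun _ hz => ⟨hz.1.le, hz.2.le⟩) (isClosed_closedAnnulus r₁ r₃)

theorem exp_mem_closedAnnulus {r₁ r₃ : ℝ} (h₁ : 0 < r₁) (h₃ : 0 < r₃) {w : ℂ}
    (hw : w ∈ verticalClosedStrip (Real.log r₁) (Real.log r₃)) : exp w ∈ closedAnnulus r₁ r₃ := by
  show r₁ ≤ ‖exp w‖ ∧ ‖exp w‖ ≤ r₃
  rw [norm_exp, ← Real.log_le_iff_le_exp h₁, ← Real.le_log_iff_exp_le h₃]
  exact hw

theorem exp_mem_openAnnulus {r₁ r₃ : ℝ} (h₁ : 0 < r₁) (h₃ : 0 < r₃) {w : ℂ}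
    (hw : w ∈ verticalStrip (Real.log r₁) (Real.log r₃)) : exp w ∈ openAnnulus r₁ r₃ := by
  show r₁ < ‖exp w‖ ∧ ‖exp w‖ < r₃
  rw [norm_exp, ← Real.log_lt_iff_lt_exp h₁, ← Real.lt_log_iff_exp_lt h₃]
  exact hw

theorem log_mem_verticalClosedStrip {r₁ r₃ : ℝ} (h₁ : 0 < r₁) {z : ℂ}
    (hz : z ∈ closedAnnulus r₁ r₃) : log z ∈ verticalClosedStrip (Real.log r₁) (Real.log r₃) := by
  rw [verticalClosedStrip, mem_preimage, log_re]
  exact ⟨Real.log_le_log h₁ hz.1, Real.log_le_log (h₁.trans_le hz.1) hz.2⟩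

theorem ne_zero_of_mem_closedAnnulus {r₁ r₃ : ℝ} (h₁ : 0 < r₁) {z : ℂ}
    (hz : z ∈ closedAnnulus r₁ r₃) : z ≠ 0 :=
  norm_pos_iff.1 (h₁.trans_le hz.1)

theorem norm_le_rpow_mul_rpow_of_mem_closedAnnulus {f : ℂ → ℂ} {r₁ r₃ m₁ m₃ : ℝ} (h₁ : 0 < r₁)
    (h₁₃ : r₁ < r₃) (hf : DiffContOnCl ℂ f (openAnnulus r₁ r₃))
    (hm₁ : ∀ z : ℂ, ‖z‖ = r₁ → ‖f z‖ ≤ m₁) (hm₃ : ∀ z : ℂ, ‖z‖ = r₃ → ‖f z‖ ≤ m₃)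
    {z : ℂ} (hz : z ∈ closedAnnulus r₁ r₃) :
    ‖f z‖ ≤ m₁ ^ (1 - (Real.log ‖z‖ - Real.log r₁) / (Real.log r₃ - Real.log r₁)) *
      m₃ ^ ((Real.log ‖z‖ - Real.log r₁) / (Real.log r₃ - Real.log r₁)) := by
  have h₃ : 0 < r₃ := h₁.trans h₁₃
  have hl : Real.log r₁ < Real.log r₃ := Real.log_lt_log h₁ h₁₃
  have hexp : MapsTo exp (verticalStrip (Real.log r₁) (Real.log r₃)) (openAnnulus r₁ r₃) :=
    fun _ hw => exp_mem_openAnnulus h₁ h₃ hw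
  have hg : DiffContOnCl ℂ (f ∘ exp) (verticalStrip (Real.log r₁) (Real.log r₃)) :=
    hf.comp differentiable_exp.diffContOnCl hexp
  have hB : BddAbove ((norm ∘ f ∘ exp) '' verticalClosedStrip (Real.log r₁) (Real.log r₃)) := by
    have hK : IsCompact (closure (openAnnulus r₁ r₃)) :=
      (isCompact_closedAnnulus r₁ r₃).of_isClosed_subset isClosed_closure
        (closure_openAnnulus_subset r₁ r₃)
    refine (hK.image_of_continuousOn hf.continuousOn.norm).bddAbove.mono ?_
    rw [← closure_verticalStrip hl]
    rintro _ ⟨w, hw, rfl⟩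
    exact ⟨exp w, map_mem_closure continuous_exp hw hexp, rfl⟩
  have edge {r m : ℝ} (hr : 0 < r) (hm : ∀ z : ℂ, ‖z‖ = r → ‖f z‖ ≤ m) :
      ∀ w ∈ re ⁻¹' {Real.log r}, ‖(f ∘ exp) w‖ ≤ m := fun w hw =>
    hm _ (by rw [norm_exp, show w.re = Real.log r from hw, Real.exp_log hr])
  have := norm_le_interp_of_mem_verticalClosedStrip' hl (log_mem_verticalClosedStrip h₁ hz) hg hB
    (edge h₁ hm₁) (edge h₃ hm₃)
  rwa [Function.comp_apply, exp_log (ne_zero_of_mem_closedAnnulus h₁ hz), log_re] at this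

theorem eqOn_zero_closedAnnulus_of_eq_zero_on_circle {f : ℂ → ℂ} {r₁ r₂ r₃ : ℝ} (h₁ : 0 < r₁)
    (h₁₂ : r₁ ≤ r₂) (h₂₃ : r₂ ≤ r₃) (hf : AnalyticOnNhd ℂ f (closedAnnulus r₁ r₃))
    (h₀ : ∀ z : ℂ, ‖z‖ = r₂ → f z = 0) : EqOn f 0 (closedAnnulus r₁ r₃) := by
  have h₂ : 0 < r₂ := h₁.trans_le h₁₂
  have h₃ : 0 < r₃ := h₂.trans_le h₂₃
  have hg : AnalyticOnNhd ℂ (f ∘ exp) (verticalClosedStrip (Real.log r₁) (Real.log r₃)) :=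
    fun w hw => (hf _ (exp_mem_closedAnnulus h₁ h₃ hw)).comp analyticAt_cexp
  have hline : ∃ᶠ w in 𝓝[≠] (Real.log r₂ : ℂ), (f ∘ exp) w = 0 := by
    refine (frequently_re_eq_nhdsNE _).mono fun w hw => h₀ _ ?_
    rw [norm_exp, hw, ofReal_re, Real.exp_log h₂]
  have hzero := hg.eqOn_zero_of_preconnected_of_frequently_eq_zero
    ((convex_Icc _ _).linear_preimage reLm).isPreconnected
    ⟨Real.log_le_log h₁ h₁₂, Real.log_le_log h₂ h₂₃⟩ hline
  intro z hz
  simpa [exp_log (ne_zero_of_mem_closedAnnulus h₁ hz)] using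
    hzero (log_mem_verticalClosedStrip h₁ hz)

theorem log_le_of_le_rpow_mul_rpow {x a b t : ℝ} (hx : 0 < x) (ha : 0 ≤ a) (hb : 0 ≤ b)
    (ht₀ : t ≠ 0) (ht₁ : t ≠ 1) (h : x ≤ a ^ (1 - t) * b ^ t) :
    Real.log x ≤ (1 - t) * Real.log a + t * Real.log b := by
  have ha' : 0 < a := ha.lt_of_ne <| by
    rintro rfl
    rw [Real.zero_rpow (sub_ne_zero.2 ht₁.symm), zero_mul] at h
    exact hx.not_ge h
  have hb' : 0 < b := hb.lt_of_ne <| by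
    rintro rfl
    rw [Real.zero_rpow ht₀, mul_zero] at h
    exact hx.not_ge h
  rw [← Real.log_rpow ha', ← Real.log_rpow hb',
    ← Real.log_mul (Real.rpow_pos_of_pos ha' _).ne' (Real.rpow_pos_of_pos hb' _).ne']
  exact Real.log_le_log hx h

section maxModulus

variable {f : ℂ → ℂ}

theorem maxModulus_nonneg (f : ℂ → ℂ) (r : ℝ) : 0 ≤ maxModulus f r :=
  Real.sSup_nonneg fun _ ⟨_, _, hx⟩ => hx ▸ norm_nonneg _

theorem maxModulus_le {r m : ℝ} (hm : 0 ≤ m) (h : ∀ z : ℂ, ‖z‖ = r → ‖f z‖ ≤ m) :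
    maxModulus f r ≤ m :=
  Real.sSup_le (fun _ ⟨z, hz, hx⟩ => hx ▸ h z hz) hm

theorem norm_le_maxModulus {r : ℝ} (hf : ContinuousOn f {z : ℂ | ‖z‖ = r}) {z : ℂ} (hz : ‖z‖ = r) :
    ‖f z‖ ≤ maxModulus f r := by
  have hK : IsCompact {z : ℂ | ‖z‖ = r} := by
    simpa only [Metric.sphere, dist_zero_right] using isCompact_sphere (0 : ℂ) r
  exact le_csSup (hK.image_of_continuousOn hf.norm).bddAbove ⟨z, hz, rfl⟩

theorem maxModulus_le_rpow_mul_rpow {r₁ r₂ r₃ : ℝ} (h₁ : 0 < r₁) (h₁₂ : r₁ ≤ r₂) (h₂₃ : r₂ ≤ r₃)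
    (h₁₃ : r₁ < r₃) (hf : AnalyticOnNhd ℂ f (closedAnnulus r₁ r₃)) :
    maxModulus f r₂ ≤
      maxModulus f r₁ ^ (1 - (Real.log r₂ - Real.log r₁) / (Real.log r₃ - Real.log r₁)) *
        maxModulus f r₃ ^ ((Real.log r₂ - Real.log r₁) / (Real.log r₃ - Real.log r₁)) := by
  have hcont {r : ℝ} (h₁ : r₁ ≤ r) (h₃ : r ≤ r₃) : ContinuousOn f {z : ℂ | ‖z‖ = r} :=
    hf.continuousOn.mono (circle_subset_closedAnnulus h₁ h₃)
  have hdiff : DiffContOnCl ℂ f (openAnnulus r₁ r₃) :=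
    ⟨hf.differentiableOn.mono fun _ hz => ⟨hz.1.le, hz.2.le⟩,
      hf.continuousOn.mono (closure_openAnnulus_subset r₁ r₃)⟩
  refine maxModulus_le (mul_nonneg (Real.rpow_nonneg (maxModulus_nonneg f r₁) _)
    (Real.rpow_nonneg (maxModulus_nonneg f r₃) _)) fun z hz => ?_
  have := norm_le_rpow_mul_rpow_of_mem_closedAnnulus h₁ h₁₃ hdiff
    (fun _ => norm_le_maxModulus (hcont le_rfl h₁₃.le))
    (fun _ => norm_le_maxModulus (hcont h₁₃.le le_rfl))
    (circle_subset_closedAnnulus h₁₂ h₂₃ hz)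
  rwa [hz] at this

theorem maxModulus_eq_zero_of_maxModulus_eq_zero {r₁ r₂ r₃ r : ℝ} (h₁ : 0 < r₁) (h₁₂ : r₁ ≤ r₂)
    (h₂₃ : r₂ ≤ r₃) (hf : AnalyticOnNhd ℂ f (closedAnnulus r₁ r₃)) (h₀ : maxModulus f r₂ = 0)
    (hr₁ : r₁ ≤ r) (hr₃ : r ≤ r₃) : maxModulus f r = 0 := by
  have hcircle (z : ℂ) (hz : ‖z‖ = r₂) : f z = 0 := by
    have := norm_le_maxModulus (hf.continuousOn.mono (circle_subset_closedAnnulus h₁₂ h₂₃)) hz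
    rwa [h₀, norm_le_zero_iff] at this
  have hzero := eqOn_zero_closedAnnulus_of_eq_zero_on_circle h₁ h₁₂ h₂₃ hf hcircle
  refine (maxModulus_le le_rfl fun z hz => ?_).antisymm (maxModulus_nonneg f r)
  rw [hzero (circle_subset_closedAnnulus hr₁ hr₃ hz), Pi.zero_apply, norm_zero]

theorem log_maxModulus_le {r₁ r₂ r₃ : ℝ} (h₁ : 0 < r₁) (h₁₂ : r₁ < r₂) (h₂₃ : r₂ < r₃)
    (hf : AnalyticOnNhd ℂ f (closedAnnulus r₁ r₃)) (hpos : 0 < maxModulus f r₂) :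
    (Real.log r₃ - Real.log r₁) * Real.log (maxModulus f r₂) ≤
      (Real.log r₃ - Real.log r₂) * Real.log (maxModulus f r₁) +
        (Real.log r₂ - Real.log r₁) * Real.log (maxModulus f r₃) := by
  have h₂ : 0 < r₂ := h₁.trans h₁₂
  have hl₁₂ : 0 < Real.log r₂ - Real.log r₁ := sub_pos.2 (Real.log_lt_log h₁ h₁₂)
  have hl₂₃ : 0 < Real.log r₃ - Real.log r₂ := sub_pos.2 (Real.log_lt_log h₂ h₂₃)
  have hL : 0 < Real.log r₃ - Real.log r₁ := by linarith
  have hconvex := log_le_of_le_rpow_mul_rpow hpos (maxModulus_nonneg f r₁) (maxModulus_nonneg f r₃)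
    (div_pos hl₁₂ hL).ne' (div_lt_one hL |>.2 (by linarith)).ne
    (maxModulus_le_rpow_mul_rpow h₁ h₁₂.le h₂₃.le (h₁₂.trans h₂₃) hf)
  calc (Real.log r₃ - Real.log r₁) * Real.log (maxModulus f r₂)
      ≤ (Real.log r₃ - Real.log r₁) * _ := mul_le_mul_of_nonneg_left hconvex hL.le
    _ = _ := by field_simp; ring

end maxModulus

/-- Hadamard's three circle theorem. -/
theorem stmt_6 (r₁ r₂ r₃ : ℝ) (h1 : 0 < r₁) (h12 : r₁ < r₂) (h23 : r₂ < r₃)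
    (U : Set ℂ) (hU : IsOpen U)
    (hsub : {z : ℂ | r₁ ≤ ‖z‖ ∧ ‖z‖ ≤ r₃} ⊆ U)
    (f : ℂ → ℂ) (hf : DifferentiableOn ℂ f U)
    (M : ℝ → ℝ) (hM : ∀ r : ℝ, M r = sSup ((fun z => ‖f z‖) '' {z : ℂ | ‖z‖ = r})) :
    Real.log (r₃ / r₁) * Real.log (M r₂) ≤
      Real.log (r₃ / r₂) * Real.log (M r₁) + Real.log (r₂ / r₁) * Real.log (M r₃) := by
  obtain rfl : M = maxModulus f := funext hM
  have hana : AnalyticOnNhd ℂ f (closedAnnulus r₁ r₃) := (hf.analyticOnNhd hU).mono hsub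
  have h2 : 0 < r₂ := h1.trans h12
  have h3 : 0 < r₃ := h2.trans h23
  rw [Real.log_div h3.ne' h1.ne', Real.log_div h3.ne' h2.ne', Real.log_div h2.ne' h1.ne']
  rcases (maxModulus_nonneg f r₂).eq_or_lt with h0 | hpos
  · have hvanish {r : ℝ} (hr₁ : r₁ ≤ r) (hr₃ : r ≤ r₃) : maxModulus f r = 0 :=
      maxModulus_eq_zero_of_maxModulus_eq_zero h1 h12.le h23.le hana h0.symm hr₁ hr₃
    rw [← h0, hvanish le_rfl (h12.trans h23).le, hvanish (h12.trans h23).le le_rfl, Real.log_zero]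
    simp
  · exact log_maxModulus_le h1 h12 h23 hana hpos
end

section
/- If |Δu| ≤ |Vu| pointwise for u ∈ C₀^∞(ℝ^d) with supp u ⊆ {x_d > 0}, V ∈ L^{d/2}(ℝ^d), 1/p − 1/p′ = 2/d, and the Carleman estimate ‖e^{−λ x_d} u‖_{L^{p′}} ≤ C ‖e^{−λ x_d} Δu‖_{L^p} holds for all sufficiently large λ > 0, then for any strip S_ρ = {x : x_d ∈ [0,ρ]} with C‖V‖_{L^{d/2}(S_ρ + t e_d)} ≤ 1/2 for all t ∈ ℝ, one has the bound ‖e^{−λ(x_d−ρ)} u‖_{L^{p′}(S_ρ)} ≤ 2C ‖Δu‖_{L^p(ℝ^d \ S_ρ)} for all λ > 0, and consequently u ≡ 0 on S_ρ. -/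
open MeasureTheory Set ENNReal Topology

private lemma lapTerm_contDiff (d : ℕ) (u : EuclideanSpace ℝ (Fin (d+1)) → ℝ)
    (hu : ContDiff ℝ (⊤ : ℕ∞) u) (i : Fin (d+1)) :
    Continuous fun x => fderiv ℝ (fun y => fderiv ℝ u y (EuclideanSpace.single i (1:ℝ))) x
      (EuclideanSpace.single i (1:ℝ)) := by
  have h1 : ContDiff ℝ (⊤ : ℕ∞) (fderiv ℝ u) := hu.fderiv_right (by simp)
  have h2 : ContDiff ℝ (⊤ : ℕ∞) (fun y => fderiv ℝ u y (EuclideanSpace.single i (1:ℝ))) :=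
    h1.clm_apply contDiff_const
  have h3 : ContDiff ℝ (⊤ : ℕ∞) (fderiv ℝ (fun y => fderiv ℝ u y (EuclideanSpace.single i (1:ℝ)))) :=
    h2.fderiv_right (by simp)
  exact (h3.clm_apply contDiff_const).continuous

private lemma lapTerm_vanish (d : ℕ) (u : EuclideanSpace ℝ (Fin (d+1)) → ℝ)
    (U : Set (EuclideanSpace ℝ (Fin (d+1)))) (hU : IsOpen U) (h0 : ∀ y ∈ U, u y = 0)
    (i : Fin (d+1)) (x : EuclideanSpace ℝ (Fin (d+1))) (hx : x ∈ U) :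
    fderiv ℝ (fun y => fderiv ℝ u y (EuclideanSpace.single i (1:ℝ))) x
      (EuclideanSpace.single i (1:ℝ)) = 0 := by
  have hg : ∀ y ∈ U, fderiv ℝ u y = 0 := by
    intro y hy
    have hev : u =ᶠ[𝓝 y] (fun _ => (0:ℝ)) :=
      Filter.eventuallyEq_of_mem (hU.mem_nhds hy) h0
    rw [hev.fderiv_eq, fderiv_fun_const]; rfl
  have hev2 : (fun y => fderiv ℝ u y (EuclideanSpace.single i (1:ℝ))) =ᶠ[𝓝 x]
      (fun _ => (0:ℝ)) :=
    Filter.eventuallyEq_of_mem (hU.mem_nhds hx) (fun y hy => by rw [hg y hy]; rfl)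
  rw [hev2.fderiv_eq, fderiv_fun_const]; rfl

private lemma eLpNorm_split {α : Type*} [MeasurableSpace α] (μ : Measure α) (p : ℝ≥0∞)
    (hp : 1 ≤ p) (f : α → ℝ) (hf : AEStronglyMeasurable f μ) (s : Set α)
    (hs : MeasurableSet s) :
    eLpNorm f p μ ≤ eLpNorm f p (μ.restrict s) + eLpNorm f p (μ.restrict sᶜ) := by
  have hdecomp : f = s.indicator f + sᶜ.indicator f := by
    funext x
    by_cases hx : x ∈ s <;> simp [Set.indicator_apply, hx]
  calc eLpNorm f p μ = eLpNorm (s.indicator f + sᶜ.indicator f) p μ := by rw [← hdecomp]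
    _ ≤ eLpNorm (s.indicator f) p μ + eLpNorm (sᶜ.indicator f) p μ :=
        eLpNorm_add_le (hf.indicator hs) (hf.indicator hs.compl) hp
    _ = _ := by
        rw [eLpNorm_indicator_eq_eLpNorm_restrict hs,
          eLpNorm_indicator_eq_eLpNorm_restrict hs.compl]

private lemma absorb_half (A K : ℝ≥0∞) (hA : A ≠ ∞) (h : A ≤ ENNReal.ofReal (1/2) * A + K) :
    A ≤ 2 * K := by
  have h2 : ENNReal.ofReal (1/2 : ℝ) = 1/2 := by
    rw [ENNReal.ofReal_div_of_pos (by norm_num)]; norm_num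
  rw [h2] at h
  have h3 : A + A ≤ A + 2 * K := by
    calc A + A = 2 * A := (two_mul A).symm
      _ ≤ 2 * (1/2 * A + K) := mul_le_mul_right h 2
      _ = 2 * 2⁻¹ * A + 2 * K := by rw [mul_add, ← mul_assoc, one_div]
      _ = A + 2 * K := by
          rw [ENNReal.mul_inv_cancel (by norm_num) (by norm_num), one_mul]
  exact (ENNReal.add_le_add_iff_left hA).mp h3

set_option maxHeartbeats 2000000 in
/-- Unique continuation on a strip from a Carleman estimate: if `u ∈ C₀^∞` is supported in
the upper half space, satisfies `|Δu| ≤ |Vu|` with `V ∈ L^{d/2}`, the Carleman estimate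
holds for large `λ`, and the strip `S_ρ` is such that `C‖V‖_{L^{d/2}}` on every translate of
the strip is at most `1/2`, then the weighted bound holds for all `λ > 0` and `u` vanishes
on the strip `S_ρ`. -/
theorem stmt_11 (d : ℕ)
    (u V Δu : EuclideanSpace ℝ (Fin (d + 1)) → ℝ)
    (hu : ContDiff ℝ (⊤ : ℕ∞) u) (hcompact : HasCompactSupport u)
    (hΔu : ∀ x, Δu x = ∑ i : Fin (d + 1),
      fderiv ℝ (fun y => fderiv ℝ u y (EuclideanSpace.single i (1:ℝ))) x
        (EuclideanSpace.single i (1:ℝ)))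
    (hsupp : Function.support u ⊆ {x | 0 < x (Fin.last d)})
    (hV : MemLp V (ENNReal.ofReal ((d + 1 : ℝ) / 2)) volume)
    (p p' : ℝ≥0∞) (hp : 1 ≤ p) (hpp' : p ≤ p') (hexp : 1 / p - 1 / p' = 2 / (d + 1 : ℝ≥0∞))
    (hdiff : ∀ x, |Δu x| ≤ |V x * u x|)
    (C : ℝ) (hC : 0 < C)
    (hCarleman : ∃ lam₀ : ℝ, ∀ lam : ℝ, lam₀ ≤ lam →
      eLpNorm (fun x => Real.exp (-lam * x (Fin.last d)) * u x) p' volume ≤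
        ENNReal.ofReal C * eLpNorm (fun x => Real.exp (-lam * x (Fin.last d)) * Δu x) p volume)
    (ρ : ℝ) (hρ : 0 < ρ)
    (hVsmall : ∀ t : ℝ,
      ENNReal.ofReal C *
        eLpNorm V (ENNReal.ofReal ((d + 1 : ℝ) / 2))
          (volume.restrict {x | x (Fin.last d) ∈ Set.Icc t (t + ρ)}) ≤
        ENNReal.ofReal (1 / 2)) :
    (∀ lam : ℝ, 0 < lam →
      eLpNorm (fun x => Real.exp (-lam * (x (Fin.last d) - ρ)) * u x) p'
          (volume.restrict {x | x (Fin.last d) ∈ Set.Icc 0 ρ}) ≤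
        2 * ENNReal.ofReal C *
          eLpNorm Δu p (volume.restrict {x | x (Fin.last d) ∈ Set.Icc 0 ρ}ᶜ)) ∧
    ∀ x, x (Fin.last d) ∈ Set.Icc 0 ρ → u x = 0 := by
  obtain ⟨lam₀, hCar⟩ := hCarleman
  set S : Set (EuclideanSpace ℝ (Fin (d+1))) := {x | x (Fin.last d) ∈ Set.Icc 0 ρ} with hSdef
  have hcoord : Continuous fun x : EuclideanSpace ℝ (Fin (d+1)) => x (Fin.last d) :=
    (EuclideanSpace.proj (𝕜 := ℝ) (Fin.last d)).continuous
  have hSmeas : MeasurableSet S :=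
    measurableSet_preimage hcoord.measurable measurableSet_Icc
  -- u vanishes where coordinate is nonpositive
  have husupp : ∀ x : EuclideanSpace ℝ (Fin (d+1)), x (Fin.last d) ≤ 0 → u x = 0 := by
    intro x hx
    by_contra hne
    exact absurd (hsupp (Function.mem_support.mpr hne)) (by simpa using not_lt.mpr hx)
  -- Δu is continuous with compact support
  have hΔeq : Δu = fun x => ∑ i : Fin (d + 1),
      fderiv ℝ (fun y => fderiv ℝ u y (EuclideanSpace.single i (1:ℝ))) x
        (EuclideanSpace.single i (1:ℝ)) := funext hΔu
  have hΔcont : Continuous Δu := by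
    rw [hΔeq]
    exact continuous_finset_sum _ (fun i _ => lapTerm_contDiff d u hu i)
  have hΔvanish : ∀ (U : Set (EuclideanSpace ℝ (Fin (d+1)))), IsOpen U →
      (∀ y ∈ U, u y = 0) → ∀ x ∈ U, Δu x = 0 := by
    intro U hU h0 x hx
    rw [hΔu x]
    exact Finset.sum_eq_zero fun i _ => lapTerm_vanish d u U hU h0 i x hx
  have hΔcs : HasCompactSupport Δu := by
    apply hcompact.mono'
    intro x hx
    by_contra hxt
    exact hx (hΔvanish (tsupport u)ᶜ (isClosed_tsupport u).isOpen_compl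
      (fun y hy => image_eq_zero_of_notMem_tsupport hy) x hxt)
  have hΔmem : MemLp Δu p volume := hΔcont.memLp_of_hasCompactSupport hΔcs
  -- exponent arithmetic
  set r : ℝ≥0∞ := ENNReal.ofReal ((d + 1 : ℝ) / 2) with hrdef
  have hrinv : 1 / r = 2 / ((d:ℝ≥0∞) + 1) := by
    rw [hrdef, one_div, ← ENNReal.ofReal_inv_of_pos (by positivity)]
    have : (((d:ℝ) + 1) / 2)⁻¹ = 2 / ((d:ℝ)+1) := by rw [inv_div]
    rw [this, ENNReal.ofReal_div_of_pos (by positivity)]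
    congr 1
    · norm_num
    · rw [ENNReal.ofReal_add (by positivity) zero_le_one, ENNReal.ofReal_natCast,
        ENNReal.ofReal_one]
  have hp'nezero : p' ≠ 0 := (lt_of_lt_of_le zero_lt_one (hp.trans hpp')).ne'
  have hinvle : 1 / p' ≤ 1 / p := by
    simp only [one_div]
    exact ENNReal.inv_le_inv.mpr hpp'
  have hpqr : 1 / p = 1 / r + 1 / p' := by
    rw [hrinv, ← hexp, tsub_add_cancel_of_le hinvle]
  -- the weight functions
  have hwcont : ∀ lam : ℝ,
      Continuous fun x : EuclideanSpace ℝ (Fin (d+1)) =>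
        Real.exp (-lam * x (Fin.last d)) * u x := fun lam =>
    ((Real.continuous_exp.comp (continuous_const.mul hcoord)).mul hu.continuous)
  have hwcs : ∀ lam : ℝ,
      HasCompactSupport fun x : EuclideanSpace ℝ (Fin (d+1)) =>
        Real.exp (-lam * x (Fin.last d)) * u x := fun lam =>
    HasCompactSupport.mul_left hcompact
  have hwmem : ∀ lam : ℝ,
      MemLp (fun x : EuclideanSpace ℝ (Fin (d+1)) =>
        Real.exp (-lam * x (Fin.last d)) * u x) p' volume := fun lam =>
    (hwcont lam).memLp_of_hasCompactSupport (hwcs lam)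
  set D : ℝ≥0∞ := eLpNorm Δu p (volume.restrict Sᶜ) with hDdef
  have hDfin : D ≠ ∞ :=
    ((eLpNorm_mono_measure _ Measure.restrict_le_self).trans_lt hΔmem.eLpNorm_lt_top).ne
  -- main estimate for large lam
  have key : ∀ lam : ℝ, max lam₀ 0 ≤ lam →
      eLpNorm (fun x => Real.exp (-lam * (x (Fin.last d) - ρ)) * u x) p'
        (volume.restrict S) ≤ 2 * ENNReal.ofReal C * D := by
    intro lam hlam
    have hlam0 : 0 ≤ lam := le_trans (le_max_right _ _) hlam
    set w : EuclideanSpace ℝ (Fin (d+1)) → ℝ :=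
      fun x => Real.exp (-lam * x (Fin.last d)) * u x with hwdef
    set W : EuclideanSpace ℝ (Fin (d+1)) → ℝ :=
      fun x => Real.exp (-lam * x (Fin.last d)) * Δu x with hWdef
    have hWcont : Continuous W := (Real.continuous_exp.comp (continuous_const.mul hcoord)).mul hΔcont
    set A : ℝ≥0∞ := eLpNorm w p' (volume.restrict S) with hAdef
    have hAfin : A ≠ ∞ :=
      ((eLpNorm_mono_measure _ Measure.restrict_le_self).trans_lt
        (hwmem lam).eLpNorm_lt_top).ne
    set B : ℝ≥0∞ := eLpNorm W p (volume.restrict Sᶜ) with hBdef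
    -- step: A ≤ 1/2 A + C * B
    have hstep : A ≤ ENNReal.ofReal (1/2) * A + ENNReal.ofReal C * B := by
      have h1 : A ≤ eLpNorm w p' volume :=
        eLpNorm_mono_measure _ Measure.restrict_le_self
      have h2 : eLpNorm w p' volume ≤ ENNReal.ofReal C * eLpNorm W p volume :=
        hCar lam (le_trans (le_max_left _ _) hlam)
      have h3 : eLpNorm W p volume ≤ eLpNorm W p (volume.restrict S) + B :=
        eLpNorm_split volume p hp W hWcont.aestronglyMeasurable S hSmeas
      have h4 : eLpNorm W p (volume.restrict S) ≤
          eLpNorm (fun x => V x * w x) p (volume.restrict S) := by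
        apply eLpNorm_mono
        intro x
        simp only [hWdef, hwdef, Real.norm_eq_abs, abs_mul,
          abs_of_pos (Real.exp_pos _)]
        calc Real.exp (-lam * x (Fin.last d)) * |Δu x|
            ≤ Real.exp (-lam * x (Fin.last d)) * (|V x| * |u x|) := by
              apply mul_le_mul_of_nonneg_left _ (Real.exp_pos _).le
              simpa [abs_mul] using hdiff x
          _ = |V x| * (Real.exp (-lam * x (Fin.last d)) * |u x|) := by ring
      have h5 : eLpNorm (fun x => V x * w x) p (volume.restrict S) ≤
          eLpNorm V r (volume.restrict S) * A := by
        have hh := eLpNorm_smul_le_mul_eLpNorm (μ := volume.restrict S) (p := r) (q := p')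
          (r := p) ((hwcont lam).aestronglyMeasurable.restrict) (hV.1.restrict)
          (hpqr := ⟨by simpa only [one_div] using hpqr.symm⟩)
        have heq : (V • w) = fun x => V x * w x := rfl
        rw [heq] at hh
        exact hh
      have h6 : ENNReal.ofReal C * eLpNorm V r (volume.restrict S) ≤
          ENNReal.ofReal (1/2) := by
        have := hVsmall 0
        rw [zero_add] at this
        exact this
      calc A ≤ ENNReal.ofReal C * (eLpNorm W p (volume.restrict S) + B) :=
            h1.trans (h2.trans (mul_le_mul_right h3 _))
        _ ≤ ENNReal.ofReal C * (eLpNorm V r (volume.restrict S) * A + B) := by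
            gcongr
            exact h4.trans h5
        _ = (ENNReal.ofReal C * eLpNorm V r (volume.restrict S)) * A +
            ENNReal.ofReal C * B := by ring
        _ ≤ ENNReal.ofReal (1/2) * A + ENNReal.ofReal C * B := by gcongr
    have habs : A ≤ 2 * (ENNReal.ofReal C * B) := absorb_half A _ hAfin hstep
    -- B ≤ exp(-lam ρ) * D
    have hB : B ≤ ENNReal.ofReal (Real.exp (-lam * ρ)) * D := by
      have hmono : ∀ᵐ x ∂(volume.restrict Sᶜ),
          ‖W x‖ ≤ ‖Real.exp (-lam * ρ) * Δu x‖ := by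
        rw [ae_restrict_iff' hSmeas.compl]
        apply ae_of_all
        intro x hx
        simp only [hSdef, Set.mem_compl_iff, Set.mem_setOf_eq, Set.mem_Icc, not_and_or,
          not_le] at hx
        simp only [hWdef, Real.norm_eq_abs, abs_mul, abs_of_pos (Real.exp_pos _)]
        rcases hx with hx | hx
        · have : Δu x = 0 := by
            apply hΔvanish {y | y (Fin.last d) < 0}
              (isOpen_lt hcoord continuous_const)
              (fun y hy => husupp y (le_of_lt hy)) x hx
          simp [this]
        · apply mul_le_mul_of_nonneg_right _ (abs_nonneg _)
          apply Real.exp_le_exp.mpr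
          nlinarith
      calc B ≤ eLpNorm (fun x => Real.exp (-lam * ρ) * Δu x) p (volume.restrict Sᶜ) :=
            eLpNorm_mono_ae hmono
        _ = ENNReal.ofReal (Real.exp (-lam * ρ)) * D := by
            have : (fun x => Real.exp (-lam * ρ) * Δu x) = Real.exp (-lam * ρ) • Δu := rfl
            rw [this, eLpNorm_const_smul, Real.enorm_eq_ofReal (Real.exp_pos _).le, hDdef]
    -- put together
    have hfin : eLpNorm (fun x => Real.exp (-lam * (x (Fin.last d) - ρ)) * u x) p'
        (volume.restrict S) = ENNReal.ofReal (Real.exp (lam * ρ)) * A := by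
      have heq : (fun x : EuclideanSpace ℝ (Fin (d+1)) =>
          Real.exp (-lam * (x (Fin.last d) - ρ)) * u x) = Real.exp (lam * ρ) • w := by
        funext x
        simp only [Pi.smul_apply, smul_eq_mul, hwdef, ← mul_assoc, ← Real.exp_add]
        ring_nf
      rw [heq, eLpNorm_const_smul, Real.enorm_eq_ofReal (Real.exp_pos _).le, hAdef]
    rw [hfin]
    calc ENNReal.ofReal (Real.exp (lam * ρ)) * A
        ≤ ENNReal.ofReal (Real.exp (lam * ρ)) *
          (2 * (ENNReal.ofReal C * (ENNReal.ofReal (Real.exp (-lam * ρ)) * D))) := by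
          gcongr
          exact habs.trans (by gcongr)
      _ = (ENNReal.ofReal (Real.exp (lam * ρ)) * ENNReal.ofReal (Real.exp (-lam * ρ))) *
          (2 * ENNReal.ofReal C * D) := by ring
      _ = 2 * ENNReal.ofReal C * D := by
          rw [← ENNReal.ofReal_mul (Real.exp_pos _).le, ← Real.exp_add]
          norm_num
  -- part 1 : all lam > 0
  have part1 : ∀ lam : ℝ, 0 < lam →
      eLpNorm (fun x => Real.exp (-lam * (x (Fin.last d) - ρ)) * u x) p'
        (volume.restrict S) ≤ 2 * ENNReal.ofReal C * D := by
    intro lam hlam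
    rcases le_or_gt (max lam₀ 0) lam with h | h
    · exact key lam h
    · set lam₁ := max lam₀ 0 with hlam₁
      have hmono : ∀ᵐ x ∂(volume.restrict S),
          ‖Real.exp (-lam * (x (Fin.last d) - ρ)) * u x‖ ≤
          ‖Real.exp (-lam₁ * (x (Fin.last d) - ρ)) * u x‖ := by
        rw [ae_restrict_iff' hSmeas]
        apply ae_of_all
        intro x hx
        simp only [hSdef, Set.mem_setOf_eq, Set.mem_Icc] at hx
        simp only [Real.norm_eq_abs, abs_mul, abs_of_pos (Real.exp_pos _)]
        apply mul_le_mul_of_nonneg_right _ (abs_nonneg _)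
        apply Real.exp_le_exp.mpr
        nlinarith [hx.1, hx.2, hlam.le, h.le]
      exact (eLpNorm_mono_ae hmono).trans (key lam₁ le_rfl)
  constructor
  · intro lam hlam
    exact part1 lam hlam
  -- part 2 : u vanishes on the strip
  have hMfin : 2 * ENNReal.ofReal C * D ≠ ∞ :=
    ENNReal.mul_ne_top (ENNReal.mul_ne_top (by norm_num) ENNReal.ofReal_ne_top) hDfin
  have hzero₁ : ∀ x : EuclideanSpace ℝ (Fin (d+1)),
      0 ≤ x (Fin.last d) → x (Fin.last d) < ρ → u x = 0 := by
    intro x₀ _ hx₀ρ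
    by_contra hne
    have hx₀pos : 0 < x₀ (Fin.last d) := hsupp (Function.mem_support.mpr hne)
    set ε : ℝ := |u x₀| / 2 with hεdef
    have hε : 0 < ε := by positivity
    set δ : ℝ := (ρ - x₀ (Fin.last d)) / 2 with hδdef
    have hδ : 0 < δ := by simp only [hδdef]; linarith
    -- find a ball where |u| > ε
    obtain ⟨rad, hrad, hball⟩ : ∃ rad > 0, ∀ y ∈ Metric.ball x₀ rad, ε ≤ |u y| := by
      have hopen : IsOpen {y : EuclideanSpace ℝ (Fin (d+1)) | ε < |u y|} :=
        isOpen_lt continuous_const hu.continuous.abs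
      have hx₀mem : x₀ ∈ {y : EuclideanSpace ℝ (Fin (d+1)) | ε < |u y|} := by
        simp only [Set.mem_setOf_eq, hεdef]
        exact half_lt_self (abs_pos.mpr hne)
      obtain ⟨rad, hrad, hballsub⟩ := Metric.isOpen_iff.mp hopen x₀ hx₀mem
      exact ⟨rad, hrad, fun y hy => (hballsub hy).le⟩
    set U : Set (EuclideanSpace ℝ (Fin (d+1))) :=
      Metric.ball x₀ rad ∩ {y | y (Fin.last d) ∈ Set.Ioo 0 (ρ - δ)} with hUdef
    have hUopen : IsOpen U :=
      Metric.isOpen_ball.inter (isOpen_Ioo.preimage hcoord)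
    have hx₀U : x₀ ∈ U := by
      refine ⟨Metric.mem_ball_self hrad, ?_⟩
      simp only [Set.mem_setOf_eq, Set.mem_Ioo]
      constructor
      · exact hx₀pos
      · simp only [hδdef]; linarith
    have hUS : U ⊆ S := by
      intro y hy
      obtain ⟨-, hy2⟩ := hy
      simp only [Set.mem_setOf_eq, Set.mem_Ioo] at hy2
      simp only [hSdef, Set.mem_setOf_eq, Set.mem_Icc]
      constructor
      · exact hy2.1.le
      · linarith [hy2.2]
    have hUmeas : MeasurableSet U := hUopen.measurableSet
    have hUpos : 0 < volume U := hUopen.measure_pos volume ⟨x₀, hx₀U⟩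
    have hUfin : volume U ≠ ∞ :=
      ((measure_mono Set.inter_subset_left).trans_lt measure_ball_lt_top).ne
    set m : ℝ≥0∞ := volume U ^ (1 / p'.toReal) with hmdef
    have hmpos : 0 < m := ENNReal.rpow_pos hUpos hUfin
    have hmfin : m ≠ ∞ := by
      apply ENNReal.rpow_ne_top_of_nonneg _ hUfin
      positivity
    -- for each lam > 0 lower bound the norm
    have hlower : ∀ lam : ℝ, 0 < lam →
        ENNReal.ofReal (ε * Real.exp (lam * δ)) * m ≤ 2 * ENNReal.ofReal C * D := by
      intro lam hlam
      have h1 : eLpNorm (fun _ : EuclideanSpace ℝ (Fin (d+1)) => ε * Real.exp (lam * δ)) p'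
          (volume.restrict U) ≤
          eLpNorm (fun x => Real.exp (-lam * (x (Fin.last d) - ρ)) * u x) p'
            (volume.restrict U) := by
        apply eLpNorm_mono_ae
        rw [ae_restrict_iff' hUmeas]
        apply ae_of_all
        intro y hy
        obtain ⟨hy1, hy2⟩ := hy
        simp only [Set.mem_setOf_eq, Set.mem_Ioo] at hy2
        have hεu := hball y hy1
        simp only [Real.norm_eq_abs, abs_mul, abs_of_pos (Real.exp_pos _)]
        rw [abs_of_pos hε]
        have hexpmono : Real.exp (lam * δ) ≤ Real.exp (-lam * (y (Fin.last d) - ρ)) := by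
          apply Real.exp_le_exp.mpr
          nlinarith [hy2.2]
        calc ε * Real.exp (lam * δ) ≤ |u y| * Real.exp (lam * δ) :=
              mul_le_mul_of_nonneg_right hεu (Real.exp_pos _).le
          _ ≤ |u y| * Real.exp (-lam * (y (Fin.last d) - ρ)) := by
              apply mul_le_mul_of_nonneg_left hexpmono (abs_nonneg _)
          _ = Real.exp (-lam * (y (Fin.last d) - ρ)) * |u y| := mul_comm _ _
      have h2 : eLpNorm (fun x => Real.exp (-lam * (x (Fin.last d) - ρ)) * u x) p'
          (volume.restrict U) ≤
          eLpNorm (fun x => Real.exp (-lam * (x (Fin.last d) - ρ)) * u x) p'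
            (volume.restrict S) :=
        eLpNorm_mono_measure _ (Measure.restrict_mono hUS le_rfl)
      have h3 := eLpNorm_const (μ := volume.restrict U) (ε * Real.exp (lam * δ))
        hp'nezero (by
          rw [Ne, Measure.restrict_eq_zero]
          exact hUpos.ne')
      rw [Measure.restrict_apply_univ] at h3
      have h4 : ENNReal.ofReal (ε * Real.exp (lam * δ)) * m ≤
          eLpNorm (fun _ : EuclideanSpace ℝ (Fin (d+1)) => ε * Real.exp (lam * δ)) p'
            (volume.restrict U) := by
        rw [h3, hmdef, Real.enorm_eq_ofReal (by positivity)]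
      exact h4.trans (h1.trans (h2.trans (part1 lam hlam)))
    -- contradiction
    set c : ℝ≥0∞ := ENNReal.ofReal ε * m with hcdef
    have hcne : c ≠ 0 := by
      simp only [hcdef]
      exact mul_ne_zero (by simp [hε, ENNReal.ofReal_eq_zero, not_le]) hmpos.ne'
    have hcfin : c ≠ ∞ := ENNReal.mul_ne_top ENNReal.ofReal_ne_top hmfin
    have hbound : ∀ lam : ℝ, 0 < lam →
        Real.exp (lam * δ) ≤ ((2 * ENNReal.ofReal C * D) / c).toReal := by
      intro lam hlam
      have h := hlower lam hlam
      have h' : ENNReal.ofReal (Real.exp (lam * δ)) * c ≤ 2 * ENNReal.ofReal C * D := by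
        calc ENNReal.ofReal (Real.exp (lam * δ)) * c
            = ENNReal.ofReal (ε * Real.exp (lam * δ)) * m := by
              rw [hcdef, ENNReal.ofReal_mul hε.le]; ring
          _ ≤ _ := h
      have h'' : ENNReal.ofReal (Real.exp (lam * δ)) ≤ (2 * ENNReal.ofReal C * D) / c :=
        (ENNReal.le_div_iff_mul_le (Or.inl hcne) (Or.inl hcfin)).mpr h'
      exact (ENNReal.ofReal_le_iff_le_toReal
        (by
          rw [Ne, ENNReal.div_eq_top]
          push_neg
          exact ⟨fun _ => hcne, fun h => absurd h hMfin⟩)).mp h''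
    set T : ℝ := ((2 * ENNReal.ofReal C * D) / c).toReal with hTdef
    have hT1 : Real.exp (1 * δ) ≤ T := hbound 1 one_pos
    have hTpos : 0 < T := lt_of_lt_of_le (Real.exp_pos _) hT1
    have hlamstar : 0 < Real.log (T + 1) / δ := by
      apply div_pos _ hδ
      apply Real.log_pos
      linarith
    have hcontra := hbound (Real.log (T + 1) / δ) hlamstar
    rw [div_mul_cancel₀ _ hδ.ne', Real.exp_log (by linarith)] at hcontra
    linarith
  -- extend to the closed strip
  intro x hx
  simp only [Set.mem_Icc] at hx
  rcases lt_or_eq_of_le hx.2 with h | h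
  · exact hzero₁ x hx.1 h
  · -- x (Fin.last d) = ρ : approximate from below
    set v : EuclideanSpace ℝ (Fin (d+1)) := EuclideanSpace.single (Fin.last d) (1:ℝ) with hvdef
    set y : ℕ → EuclideanSpace ℝ (Fin (d+1)) := fun n => x - (ρ / (n+1)) • v with hydef
    have hyval : ∀ n : ℕ, (y n) (Fin.last d) = ρ - ρ / (n+1) := by
      intro n
      simp [hydef, hvdef, PiLp.sub_apply, PiLp.smul_apply, EuclideanSpace.single_apply, h]
    have hyzero : ∀ n : ℕ, u (y n) = 0 := by
      intro n
      have hstep : 0 < ρ / ((n:ℝ)+1) := by positivity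
      apply hzero₁
      · rw [hyval n]
        have : ρ / ((n:ℝ)+1) ≤ ρ := by
          rw [div_le_iff₀ (by positivity)]
          nlinarith [Nat.cast_nonneg (α := ℝ) n]
        linarith
      · rw [hyval n]; linarith
    have hytendsto : Filter.Tendsto y Filter.atTop (𝓝 x) := by
      have h1 : Filter.Tendsto (fun n : ℕ => ρ / ((n:ℝ)+1)) Filter.atTop (𝓝 0) := by
        have := tendsto_const_div_atTop_nhds_zero_nat ρ
        have h2 : Filter.Tendsto (fun n : ℕ => (n:ℝ)+1) Filter.atTop Filter.atTop :=
          Filter.tendsto_atTop_add_const_right _ 1 tendsto_natCast_atTop_atTop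
        exact Filter.Tendsto.div_atTop tendsto_const_nhds h2
      have h2 : Continuous fun c : ℝ => x - c • v :=
        continuous_const.sub (continuous_id.smul continuous_const)
      have := (h2.tendsto 0).comp h1
      simpa [Function.comp_def, hydef] using this
    have := ((hu.continuous.tendsto x).comp hytendsto)
    have hconst : (fun n => u (y n)) = fun _ => (0:ℝ) := funext hyzero
    rw [show u ∘ y = fun n => u (y n) from rfl, hconst] at this
    exact (tendsto_nhds_unique tendsto_const_nhds this).symm
end

section
/- One-dimensional eigenfunction lower bound via Gronwall: let V : ℝ → ℝ be measurable and bounded, E ∈ ℝ, and ψ ∈ W^{2,2}_{loc}(ℝ) satisfy −ψ'' + Vψ = Eψ. For δ ∈ (0,1/2) define, for fixed z ∈ ℝ, f(x) = ∫_{z+x−δ}^{z+x+δ} |ψ|² dt. Then there is a constant C_δ > 0 depending only on δ such that |f'(x)| ≤ 2(C_δ + ‖V−E‖_∞) f(x), and consequently f(x) ≤ exp(2(C_δ + ‖V−E‖_∞)|x|)·f(0) for all x ∈ ℝ. -/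
/-!
The derivative of the local mass is `|ψ(z+x+δ)|² - |ψ(z+x-δ)|² = ∫ 2⟪ψ, ψ'⟫` over the window.
On an interval of length `L`, the pointwise bound `‖ψ''‖ ≤ M ‖ψ‖` gives the one-dimensional
interior estimate `sup ‖ψ'‖ ≤ (9 / L² + M) ∫ ‖ψ‖`: the slope of `ψ` between two points of the
outer thirds where `‖ψ‖` equals its average is at most `9 / L² ∫ ‖ψ‖`, and `ψ'` deviates from
that slope by at most `∫ ‖ψ''‖ ≤ M ∫ ‖ψ‖`. Cauchy–Schwarz turns this into
`|f'| ≤ 2 (9 / L + M L) f` with `L = 2δ < 1`, and Grönwall's inequality, run forwards and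
backwards in `x`, gives the exponential bound.
-/

open MeasureTheory Set Real
open scoped Interval

theorem exists_mem_Ioo_mul_eq_intervalIntegral {g : ℝ → ℝ} (hg : Continuous g) {p q : ℝ}
    (hpq : p < q) : ∃ s ∈ Ioo p q, (q - p) * g s = ∫ t in p..q, g t := by
  obtain ⟨s, hs, hs_eq⟩ := exists_eq_interval_average hpq.ne hg.continuousOn
  rw [interval_average_eq_div, eq_div_iff (sub_pos.2 hpq).ne'] at hs_eq
  exact ⟨s, uIoo_of_le hpq.le ▸ hs, by rw [← hs_eq, mul_comm]⟩

section SecondOrder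

variable {E : Type*} [NormedAddCommGroup E] [NormedSpace ℝ E] [CompleteSpace E]
  {w w' w'' : ℝ → E} {M a b : ℝ}

theorem intervalIntegrable_of_hasDerivAt_of_norm_le (hab : a ≤ b) (hw : Continuous w)
    (hw' : ∀ t, HasDerivAt w' (w'' t) t) (hM : ∀ t ∈ Icc a b, ‖w'' t‖ ≤ M * ‖w t‖) :
    IntervalIntegrable w'' volume a b := by
  have hderiv : w'' = deriv w' := funext fun t => (hw' t).deriv.symm
  have hMw : Continuous fun t => M * ‖w t‖ := by fun_prop
  refine (hMw.intervalIntegrable a b).mono_fun' ?_ ?_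
  · rw [hderiv]
    exact aestronglyMeasurable_deriv _ _
  · refine ae_restrict_of_forall_mem measurableSet_uIoc fun t ht => hM t ?_
    rw [uIoc_of_le hab] at ht
    exact Ioc_subset_Icc_self ht

theorem norm_sub_le_mul_integral_norm_of_norm_deriv_le (hw : Continuous w)
    (hw' : ∀ t, HasDerivAt w' (w'' t) t) (hM : ∀ t ∈ Icc a b, ‖w'' t‖ ≤ M * ‖w t‖)
    {x y : ℝ} (hx : x ∈ Icc a b) (hy : y ∈ Icc a b) :
    ‖w' x - w' y‖ ≤ M * ∫ t in a..b, ‖w t‖ := by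
  have hab : a ≤ b := hx.1.trans hx.2
  have hsub : uIcc y x ⊆ uIcc a b := uIcc_subset_uIcc (uIcc_of_le hab ▸ hy) (uIcc_of_le hab ▸ hx)
  have hint := intervalIntegrable_of_hasDerivAt_of_norm_le hab hw hw' hM
  have hMw : Continuous fun t => M * ‖w t‖ := by fun_prop
  have hbound : ∀ t ∈ Ι a b, ‖w'' t‖ ≤ M * ‖w t‖ := fun t ht =>
    hM t (uIcc_of_le hab ▸ uIoc_subset_uIcc ht)
  rw [← intervalIntegral.integral_eq_sub_of_hasDerivAt (fun t _ => hw' t) (hint.mono_set hsub),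
    ← intervalIntegral.integral_const_mul]
  calc ‖∫ t in y..x, w'' t‖
      ≤ |∫ t in y..x, M * ‖w t‖| := intervalIntegral.norm_integral_le_abs_of_norm_le
        (ae_restrict_of_forall_mem measurableSet_uIoc fun t ht =>
          hbound t (uIoc_subset_uIoc_of_uIcc_subset_uIcc hsub ht))
        (hMw.intervalIntegrable _ _)
    _ ≤ |∫ t in a..b, M * ‖w t‖| := intervalIntegral.abs_integral_mono_interval
        (uIoc_subset_uIoc_of_uIcc_subset_uIcc hsub)
        (ae_restrict_of_forall_mem measurableSet_uIoc fun t ht =>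
          (norm_nonneg _).trans (hbound t ht))
        (hMw.intervalIntegrable _ _)
    _ = ∫ t in a..b, M * ‖w t‖ := abs_of_nonneg (intervalIntegral.integral_nonneg hab
        fun t ht => (norm_nonneg _).trans (hM t ht))

theorem norm_deriv_le_of_norm_second_deriv_le (hab : a < b) (hw : ∀ t, HasDerivAt w (w' t) t)
    (hw' : ∀ t, HasDerivAt w' (w'' t) t) (hM : ∀ t ∈ Icc a b, ‖w'' t‖ ≤ M * ‖w t‖)
    {x : ℝ} (hx : x ∈ Icc a b) :
    ‖w' x‖ ≤ (9 / (b - a) ^ 2 + M) * ∫ t in a..b, ‖w t‖ := by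
  have hwc : Continuous w := continuous_iff_continuousAt.2 fun t => (hw t).continuousAt
  set L := b - a
  set I := ∫ t in a..b, ‖w t‖ with hI
  have hL0 : 0 < L := sub_pos.2 hab
  obtain ⟨s, ⟨hs₁, hs₂⟩, hs⟩ := exists_mem_Ioo_mul_eq_intervalIntegral hwc.norm
    (by linarith : a < a + L / 3)
  obtain ⟨u, ⟨hu₁, hu₂⟩, hu⟩ := exists_mem_Ioo_mul_eq_intervalIntegral hwc.norm
    (by linarith : b - L / 3 < b)
  have hthirds : L / 3 * (‖w s‖ + ‖w u‖) ≤ I := by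
    have hint : ∀ p q, IntervalIntegrable (fun t => ‖w t‖) volume p q := fun p q =>
      hwc.norm.intervalIntegrable p q
    have hmid : 0 ≤ ∫ t in (a + L / 3)..(b - L / 3), ‖w t‖ :=
      intervalIntegral.integral_nonneg (by linarith) fun t _ => norm_nonneg _
    rw [hI, ← intervalIntegral.integral_add_adjacent_intervals (hint a (a + L / 3)) (hint _ b),
      ← intervalIntegral.integral_add_adjacent_intervals (hint _ (b - L / 3)) (hint _ b),
      ← hs, ← hu, add_sub_cancel_left, sub_sub_cancel]
    linarith
  have hmvt : ‖w u - w s - (u - s) • w' x‖ ≤ M * I * (u - s) := by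
    have hderiv : ∀ t ∈ Icc s u,
        HasDerivWithinAt (fun t => w t - t • w' x) (w' t - w' x) (Icc s u) t := fun t _ => by
      simpa using ((hw t).fun_sub ((hasDerivAt_id t).smul_const (w' x))).hasDerivWithinAt
    have hbound : ∀ t ∈ Ico s u, ‖w' t - w' x‖ ≤ M * I := fun t ht =>
      norm_sub_le_mul_integral_norm_of_norm_deriv_le hwc hw' hM
        ⟨by linarith [ht.1], by linarith [ht.2]⟩ hx
    have := norm_image_sub_le_of_norm_deriv_le_segment' hderiv hbound u ⟨by linarith, le_rfl⟩
    rwa [show w u - u • w' x - (w s - s • w' x) = w u - w s - (u - s) • w' x by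
      rw [sub_smul]; abel] at this
  have hdiff : (u - s) * ‖w' x‖ ≤ ‖w s‖ + ‖w u‖ + M * I * (u - s) := by
    calc (u - s) * ‖w' x‖ = ‖(u - s) • w' x‖ := by
          rw [norm_smul, Real.norm_of_nonneg (by linarith)]
      _ ≤ ‖w u - w s‖ + ‖w u - w s - (u - s) • w' x‖ := norm_le_norm_add_norm_sub _ _
      _ ≤ ‖w s‖ + ‖w u‖ + M * I * (u - s) := by
          gcongr
          exact (norm_sub_le _ _).trans_eq (add_comm _ _)
  have hsu : L / 3 ≤ u - s := by linarith
  have hI0 : 0 ≤ I := intervalIntegral.integral_nonneg hab.le fun t _ => norm_nonneg _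
  have hexcess : (‖w' x‖ - M * I) * (L / 3) ≤ ‖w s‖ + ‖w u‖ := by
    rcases le_or_gt (‖w' x‖ - M * I) 0 with h | h
    · nlinarith [norm_nonneg (w s), norm_nonneg (w u)]
    · nlinarith
  have h9 : 9 / L ^ 2 * I = I / (L / 3) ^ 2 := by field_simp; ring
  rw [add_mul, ← sub_le_iff_le_add, h9, le_div_iff₀ (by positivity)]
  nlinarith

end SecondOrder

theorem sq_intervalIntegral_le_mul_intervalIntegral_sq {g : ℝ → ℝ} (hg : Continuous g) {a b : ℝ}
    (hab : a < b) : (∫ t in a..b, g t) ^ 2 ≤ (b - a) * ∫ t in a..b, g t ^ 2 := by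
  have hvol : volume (Ι a b) = ENNReal.ofReal (b - a) := by
    rw [uIoc_of_le hab.le, Real.volume_Ioc]
  have hjensen := (even_two.convexOn_pow (𝕜 := ℝ)).map_set_average_le
    (continuous_pow 2).continuousOn isClosed_univ (μ := volume) (t := Ι a b) (f := g)
    (by simp [hvol, hab]) (by simp [hvol]) (ae_of_all _ fun _ => mem_univ _)
    (hg.integrableOn_uIoc) ((hg.pow 2).integrableOn_uIoc)
  change (⨍ x in a..b, g x) ^ 2 ≤ ⨍ x in a..b, g x ^ 2 at hjensen
  rw [interval_average_eq_div, interval_average_eq_div, div_pow,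
    div_le_div_iff₀ (by nlinarith) (sub_pos.2 hab)] at hjensen
  nlinarith [sub_pos.2 hab]

theorem abs_norm_sq_sub_norm_sq_le {F : Type*} [NormedAddCommGroup F] [InnerProductSpace ℝ F]
    [CompleteSpace F] {ψ ψ' ψ'' : ℝ → F} {M a b : ℝ} (hab : a < b) (hM0 : 0 ≤ M)
    (hψ : ∀ t, HasDerivAt ψ (ψ' t) t) (hψ' : ∀ t, HasDerivAt ψ' (ψ'' t) t)
    (hM : ∀ t ∈ Icc a b, ‖ψ'' t‖ ≤ M * ‖ψ t‖) :
    |‖ψ b‖ ^ 2 - ‖ψ a‖ ^ 2| ≤ 2 * (9 / (b - a) + M * (b - a)) * ∫ t in a..b, ‖ψ t‖ ^ 2 := by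
  have hψc : Continuous ψ := continuous_iff_continuousAt.2 fun t => (hψ t).continuousAt
  have hψ'c : Continuous ψ' := continuous_iff_continuousAt.2 fun t => (hψ' t).continuousAt
  set c := 9 / (b - a) ^ 2 + M
  set I := ∫ t in a..b, ‖ψ t‖
  have hc : 0 ≤ c := by positivity
  have hftc : ∫ t in a..b, 2 * inner ℝ (ψ t) (ψ' t) = ‖ψ b‖ ^ 2 - ‖ψ a‖ ^ 2 :=
    intervalIntegral.integral_eq_sub_of_hasDerivAt (fun t _ => (hψ t).norm_sq)
      ((by fun_prop : Continuous fun t => 2 * inner ℝ (ψ t) (ψ' t)).intervalIntegrable _ _)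
  have hpointwise : ∀ t ∈ Icc a b, ‖2 * inner ℝ (ψ t) (ψ' t)‖ ≤ 2 * (c * I) * ‖ψ t‖ := by
    intro t ht
    rw [Real.norm_eq_abs, abs_mul, abs_two]
    calc 2 * |inner ℝ (ψ t) (ψ' t)| ≤ 2 * (‖ψ t‖ * ‖ψ' t‖) := by
          gcongr; exact abs_real_inner_le_norm _ _
      _ ≤ 2 * (‖ψ t‖ * (c * I)) := by
          gcongr; exact norm_deriv_le_of_norm_second_deriv_le hab hψ hψ' hM ht
      _ = 2 * (c * I) * ‖ψ t‖ := by ring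
  have hcs := sq_intervalIntegral_le_mul_intervalIntegral_sq hψc.norm hab
  rw [← hftc, ← Real.norm_eq_abs]
  calc ‖∫ t in a..b, 2 * inner ℝ (ψ t) (ψ' t)‖
      ≤ ∫ t in a..b, 2 * (c * I) * ‖ψ t‖ := intervalIntegral.norm_integral_le_of_norm_le hab.le
        (ae_of_all _ fun t ht => hpointwise t (Ioc_subset_Icc_self ht))
        ((by fun_prop : Continuous fun t => 2 * (c * I) * ‖ψ t‖).intervalIntegrable _ _)
    _ = 2 * c * I ^ 2 := by rw [intervalIntegral.integral_const_mul]; ring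
    _ ≤ 2 * c * ((b - a) * ∫ t in a..b, ‖ψ t‖ ^ 2) := by gcongr
    _ = 2 * (9 / (b - a) + M * (b - a)) * ∫ t in a..b, ‖ψ t‖ ^ 2 := by
        have : b - a ≠ 0 := (sub_pos.2 hab).ne'
        simp only [c]
        field_simp

theorem hasDerivAt_intervalIntegral_window {E : Type*} [NormedAddCommGroup E] [NormedSpace ℝ E]
    [CompleteSpace E] {g : ℝ → E} (hg : Continuous g) (c r x : ℝ) :
    HasDerivAt (fun x => ∫ t in (c + x - r)..(c + x + r), g t)
      (g (c + x + r) - g (c + x - r)) x := by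
  have hprim : ∀ y, HasDerivAt (fun y => ∫ t in (0 : ℝ)..y, g t) (g y) y := fun y =>
    (hg.integral_hasStrictDerivAt 0 y).hasDerivAt
  have hright : HasDerivAt (fun x => c + x + r) 1 x := ((hasDerivAt_id x).const_add c).add_const r
  have hleft : HasDerivAt (fun x => c + x - r) 1 x := ((hasDerivAt_id x).const_add c).sub_const r
  have := ((hprim _).scomp x hright).sub ((hprim _).scomp x hleft)
  simp only [one_smul] at this
  convert this using 1
  ext y
  exact (intervalIntegral.integral_interval_sub_left (hg.intervalIntegrable _ _)
    (hg.intervalIntegrable _ _)).symm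

theorem le_mul_exp_of_deriv_le {f f' : ℝ → ℝ} {K : ℝ} (hf : ∀ x, HasDerivAt f (f' x) x)
    (hbound : ∀ x, f' x ≤ K * f x) {x : ℝ} (hx : 0 ≤ x) : f x ≤ f 0 * exp (K * x) := by
  have hfc : Continuous f := continuous_iff_continuousAt.2 fun t => (hf t).continuousAt
  have := le_gronwallBound_of_liminf_deriv_right_le (f' := f') (ε := 0) hfc.continuousOn
    (fun t _ r hr => (hf t).hasDerivWithinAt.liminf_right_slope_le hr) le_rfl
    (fun t _ => (hbound t).trans_eq (add_zero _).symm) x ⟨hx, le_rfl⟩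
  rwa [gronwallBound_ε0, sub_zero] at this

theorem le_exp_mul_abs_mul_of_abs_deriv_le {f f' : ℝ → ℝ} {K : ℝ}
    (hf : ∀ x, HasDerivAt f (f' x) x) (hbound : ∀ x, |f' x| ≤ K * f x) (x : ℝ) :
    f x ≤ exp (K * |x|) * f 0 := by
  rcases le_total 0 x with hx | hx
  · rw [abs_of_nonneg hx, mul_comm]
    exact le_mul_exp_of_deriv_le hf (fun t => (abs_le.1 (hbound t)).2) hx
  · have hrefl : ∀ t, HasDerivAt (fun t => f (-t)) (-f' (-t)) t := fun t => by
      simpa [Function.comp_def] using (hf (-t)).comp t (hasDerivAt_neg t)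
    have := le_mul_exp_of_deriv_le (K := K) hrefl
      (fun t => by linarith [(abs_le.1 (hbound (-t))).1]) (neg_nonneg.2 hx)
    simpa [abs_of_nonpos hx, mul_comm] using this

/-- One-dimensional eigenfunction bound via Gronwall: for a solution of
`-ψ'' + Vψ = Eψ` with bounded potential, the local `L²`-mass
`f(x) = ∫_{z+x-δ}^{z+x+δ} |ψ|²` satisfies `|f'(x)| ≤ 2(C_δ + ‖V-E‖_∞) f(x)` and hence
`f(x) ≤ exp(2(C_δ + ‖V-E‖_∞)|x|) f(0)`. -/
theorem stmt_14 (δ : ℝ) (hδ : δ ∈ Set.Ioo (0:ℝ) (1/2)) :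
    ∃ Cδ > (0:ℝ), ∀ (V : ℝ → ℝ) (_ : Measurable V) (E M : ℝ) (_ : ∀ x, |V x - E| ≤ M)
      (ψ ψ' ψ'' : ℝ → ℂ)
      (_ : ∀ x, HasDerivAt ψ (ψ' x) x) (_ : ∀ x, HasDerivAt ψ' (ψ'' x) x)
      (_ : ∀ x, -ψ'' x + (V x : ℂ) * ψ x = (E : ℂ) * ψ x)
      (z : ℝ) (f : ℝ → ℝ)
      (_ : ∀ x, f x = ∫ t in Set.Ioo (z + x - δ) (z + x + δ), ‖ψ t‖ ^ 2),
      (∀ x, |deriv f x| ≤ 2 * (Cδ + M) * f x) ∧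
      (∀ x, f x ≤ Real.exp (2 * (Cδ + M) * |x|) * f 0) := by
  obtain ⟨hδ0, hδ1⟩ := hδ
  refine ⟨9 / (2 * δ), by positivity, ?_⟩
  intro V _ E M hVE ψ ψ' ψ'' hψ hψ' heq z f hf
  have hM0 : 0 ≤ M := (abs_nonneg _).trans (hVE 0)
  have hM : ∀ t, ‖ψ'' t‖ ≤ M * ‖ψ t‖ := fun t => by
    rw [show ψ'' t = ((V t - E : ℝ) : ℂ) * ψ t by push_cast; linear_combination -heq t,
      norm_mul, Complex.norm_real, Real.norm_eq_abs]
    gcongr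
    exact hVE t
  have hψc : Continuous ψ := continuous_iff_continuousAt.2 fun t => (hψ t).continuousAt
  have hf_eq : f = fun x => ∫ t in (z + x - δ)..(z + x + δ), ‖ψ t‖ ^ 2 := funext fun x => by
    rw [hf, intervalIntegral.integral_of_le (by linarith), integral_Ioc_eq_integral_Ioo]
  have hderiv : ∀ x, HasDerivAt f (‖ψ (z + x + δ)‖ ^ 2 - ‖ψ (z + x - δ)‖ ^ 2) x := fun x =>
    hf_eq ▸ hasDerivAt_intervalIntegral_window (hψc.norm.pow 2) z δ x
  have hbound : ∀ x, |deriv f x| ≤ 2 * (9 / (2 * δ) + M) * f x := by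
    intro x
    have hmass := abs_norm_sq_sub_norm_sq_le (by linarith : z + x - δ < z + x + δ) hM0 hψ hψ'
      (fun t _ => hM t)
    rw [show z + x + δ - (z + x - δ) = 2 * δ by ring] at hmass
    rw [(hderiv x).deriv, hf_eq]
    refine hmass.trans (mul_le_mul_of_nonneg_right ?_ ?_)
    · nlinarith
    · exact intervalIntegral.integral_nonneg (by linarith) fun t _ => by positivity
  exact ⟨hbound, le_exp_mul_abs_mul_of_abs_deriv_le
    (fun x => (hderiv x).differentiableAt.hasDerivAt) hbound⟩
end
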